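/- arXiv:2204.04274 — 3 statements merged into one kernel-verified Lean document; each statement's English description precedes it below -/
import Mathlib

section
/- The functor H: F → RMCsp(F) sending a natural number m to m and a function f: m → n to the cospan m --f--> n <--id-- n is a full, faithful, identity-on-objects symmetric monoidal functor, hence an isomorphism of props between F and the prop of right-monogamous cospans of finite sets. -/
/- STATEMENT 7: The functor H: F → RMCsp(F) sending m to m and a function
f: m → n to the cospan m --f--> n <--id-- n is a full, faithful,
identity-on-objects symmetric monoidal functor, hence an isomorphism of props
between F and the prop of right-monogamous cospans of finite sets. -/

/-- Disjoint union of functions between finite sets. -/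
def sumMap {m n m' n' : ℕ} (f : Fin m → Fin n) (g : Fin m' → Fin n') :
    Fin (m + m') → Fin (n + n') :=
  fun x => finSumFinEquiv (Sum.map f g (finSumFinEquiv.symm x))

/-- Symmetry of disjoint union. -/
def symFun (m n : ℕ) : Fin (m + n) → Fin (n + m) :=
  fun x => finSumFinEquiv (Sum.swap (finSumFinEquiv.symm x))

/-- A cospan between finite sets, with arbitrary carrier. -/
structure TCospan (m n : ℕ) where
  A : Type
  l : Fin m → A
  r : Fin n → A

/-- Isomorphism of cospans. -/
def CIso {m n : ℕ} (c d : TCospan m n) : Prop :=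
  ∃ e : c.A ≃ d.A, (∀ x, e (c.l x) = d.l x) ∧ (∀ y, e (c.r y) = d.r y)

/-- The relation generating the pushout identifying `c.r x` with `d.l x`. -/
def glueRel {m n k : ℕ} (c : TCospan m n) (d : TCospan n k) :
    (c.A ⊕ d.A) → (c.A ⊕ d.A) → Prop :=
  fun a b => ∃ x : Fin n, a = Sum.inl (c.r x) ∧ b = Sum.inr (d.l x)

/-- Composition of cospans, by pushout of the middle legs. -/
def TCospan.comp {m n k : ℕ} (c : TCospan m n) (d : TCospan n k) : TCospan m k where
  A := Quot (glueRel c d)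
  l := fun i => Quot.mk _ (Sum.inl (c.l i))
  r := fun j => Quot.mk _ (Sum.inr (d.r j))

/-- Monoidal product of cospans, by disjoint union. -/
def TCospan.tensor {m n m' n' : ℕ} (c : TCospan m n) (c' : TCospan m' n') :
    TCospan (m + m') (n + n') where
  A := c.A ⊕ c'.A
  l := fun i => Sum.map c.l c'.l (finSumFinEquiv.symm i)
  r := fun j => Sum.map c.r c'.r (finSumFinEquiv.symm j)

/-- A cospan is right-monogamous when its right leg is an isomorphism. -/
def RightMonogamous {m n : ℕ} (c : TCospan m n) : Prop := Function.Bijective c.r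

/-- The identity-on-objects mapping H of the prop morphism F → RMCsp(F). -/
def H {m n : ℕ} (f : Fin m → Fin n) : TCospan m n := ⟨Fin n, f, id⟩

/-- H is a full, faithful, identity-on-objects symmetric monoidal functor,
hence an isomorphism of props between F and right-monogamous cospans. -/
theorem H_iso_of_props :
    -- H lands in right-monogamous cospans
    (∀ (m n : ℕ) (f : Fin m → Fin n), RightMonogamous (H f)) ∧
    -- faithful: H f₁ = H f₂ (as iso classes) implies f₁ = f₂
    (∀ (m n : ℕ) (f₁ f₂ : Fin m → Fin n), CIso (H f₁) (H f₂) → f₁ = f₂) ∧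
    -- full: every right-monogamous cospan is isomorphic to one in the image of H
    (∀ (m n : ℕ) (c : TCospan m n), RightMonogamous c → ∃ f : Fin m → Fin n, CIso c (H f)) ∧
    -- functor: identities
    (∀ m : ℕ, CIso (H (fun x : Fin m => x)) ⟨Fin m, id, id⟩) ∧
    -- functor: composition (cospan composition is by pushout)
    (∀ (m n k : ℕ) (f : Fin m → Fin n) (g : Fin n → Fin k),
        CIso (H (g ∘ f)) ((H f).comp (H g))) ∧
    -- strict symmetric monoidal: tensor
    (∀ (m n m' n' : ℕ) (f : Fin m → Fin n) (f' : Fin m' → Fin n'),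
        CIso (H (sumMap f f')) ((H f).tensor (H f'))) ∧
    -- strict symmetric monoidal: symmetries map to symmetries
    (∀ m n : ℕ, CIso (H (symFun m n)) ⟨Fin (n + m), symFun m n, id⟩) := by

  refine ⟨?_, ?_, ?_, ?_, ?_, ?_, ?_⟩
  · intro m n f
    exact Function.bijective_id
  · rintro m n f₁ f₂ ⟨e, hl, hr⟩
    funext x
    exact (hr (f₁ x)).symm.trans (hl x)
  · rintro m n c ⟨hinj, hsurj⟩
    have hb : Function.Bijective c.r := ⟨hinj, hsurj⟩
    set e := (Equiv.ofBijective c.r hb).symm with he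
    refine ⟨e ∘ c.l, e, fun x => rfl, fun y => ?_⟩
    show e (c.r y) = y
    have : c.r y = Equiv.ofBijective c.r hb y := rfl
    rw [this, Equiv.symm_apply_apply]
  · intro m
    exact ⟨Equiv.refl _, fun x => rfl, fun y => rfl⟩
  · intro m n k f g
    refine ⟨{
      toFun := fun j => Quot.mk _ (Sum.inr j)
      invFun := Quot.lift (Sum.elim g id) ?_
      left_inv := fun j => rfl
      right_inv := ?_ }, fun x => ?_, fun y => rfl⟩
    · rintro a b ⟨x, rfl, rfl⟩
      rfl
    · intro q
      induction q using Quot.ind with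
      | _ a =>
        cases a with
        | inl x => exact (Quot.sound ⟨x, rfl, rfl⟩).symm
        | inr j => rfl
    · show Quot.mk _ (Sum.inr (g (f x))) = Quot.mk _ (Sum.inl (f x))
      exact (Quot.sound ⟨f x, rfl, rfl⟩).symm
  · intro m n m' n' f f'
    refine ⟨finSumFinEquiv.symm, fun x => ?_, fun y => ?_⟩
    · show finSumFinEquiv.symm (sumMap f f' x) = _
      exact finSumFinEquiv.symm_apply_apply _
    · show finSumFinEquiv.symm y = Sum.map id id (finSumFinEquiv.symm y)
      cases finSumFinEquiv.symm y <;> rfl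
  · intro m n
    exact ⟨Equiv.refl _, fun x => rfl, fun y => rfl⟩
end

section
/- Let G be a right-monogamous acyclic cospan m → G ← n and let L be a convex sub-hypergraph of G. Define C₁ as the smallest sub-hypergraph of G containing the inputs of G and every hyperedge of G not in L that has a path to L, and C₂ as the smallest sub-hypergraph containing the outputs of G with C₁ ∪ L ∪ C₂ = G. Then C₁ and C₂ share no hyperedges; in particular C₁, L, C₂ pairwise overlap only in nodes. -/
structure LHypergraph where
  V : Type
  E : Type
  src : E → List V
  tgt : E → List V

namespace LHypergraph

inductive Walk (G : LHypergraph) : G.V → G.V → Type where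
  | nil (v : G.V) : Walk G v v
  | cons {u v w : G.V} (e : G.E) (hu : u ∈ G.src e) (hv : v ∈ G.tgt e)
      (p : Walk G v w) : Walk G u w

def Walk.verts {G : LHypergraph} : {u v : G.V} → Walk G u v → List G.V
  | _, _, .nil v => [v]
  | u, _, .cons _ _ _ p => u :: p.verts

def Walk.edges {G : LHypergraph} : {u v : G.V} → Walk G u v → List G.E
  | _, _, .nil _ => []
  | _, _, .cons e _ _ p => e :: p.edges

/-- A hypergraph is acyclic if no path contains the same node twice. -/
def Acyclic (G : LHypergraph) : Prop :=
  ∀ {u v : G.V} (p : Walk G u v), p.verts.Nodup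

/-- There exists a nonempty path from u to v. -/
def Reaches (G : LHypergraph) (u v : G.V) : Prop :=
  ∃ p : Walk G u v, p.edges ≠ []

/-- A node is terminal if it is the source of no hyperedge. -/
def Terminal (G : LHypergraph) (v : G.V) : Prop := ∀ e : G.E, v ∉ G.src e

/-- A sub-hypergraph: sets of nodes and hyperedges closed under the
source and target maps. -/
structure Sub (G : LHypergraph) where
  SV : Set G.V
  SE : Set G.E
  closed_src : ∀ e ∈ SE, ∀ v ∈ G.src e, v ∈ SV
  closed_tgt : ∀ e ∈ SE, ∀ v ∈ G.tgt e, v ∈ SV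

/-- Inclusion of sub-hypergraphs. -/
def Sub.le {G : LHypergraph} (A B : Sub G) : Prop := A.SV ⊆ B.SV ∧ A.SE ⊆ B.SE

/-- A sub-hypergraph L is convex if every hyperedge on any path of G between
two nodes of L is in L. -/
def Sub.Convex {G : LHypergraph} (L : Sub G) : Prop :=
  ∀ (u v : G.V) (p : Walk G u v), u ∈ L.SV → v ∈ L.SV → ∀ e ∈ p.edges, e ∈ L.SE

/-- A hyperedge has a path to L: one of its targets is in L or reaches a node
of L. -/
def EdgeToSub (G : LHypergraph) (L : Sub G) (e : G.E) : Prop :=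
  ∃ v ∈ G.tgt e, ∃ w ∈ L.SV, v = w ∨ G.Reaches v w

/-- `IsC₁ G f L C₁` : C₁ is the smallest sub-hypergraph of G containing the
inputs of G and every hyperedge of G not in L that has a path to L. -/
def IsC₁ {m : ℕ} (G : LHypergraph) (f : Fin m → G.V) (L C₁ : Sub G) : Prop :=
  Set.range f ⊆ C₁.SV ∧
  {e : G.E | e ∉ L.SE ∧ EdgeToSub G L e} ⊆ C₁.SE ∧
  ∀ D : Sub G, Set.range f ⊆ D.SV → {e : G.E | e ∉ L.SE ∧ EdgeToSub G L e} ⊆ D.SE →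
    C₁.le D

/-- `IsC₂ G g L C₁ C₂` : C₂ is the smallest sub-hypergraph of G containing the
outputs of G such that C₁ ∪ L ∪ C₂ = G. -/
def IsC₂ {n : ℕ} (G : LHypergraph) (g : Fin n → G.V) (L C₁ C₂ : Sub G) : Prop :=
  Set.range g ⊆ C₂.SV ∧
  (C₁.SV ∪ L.SV ∪ C₂.SV = Set.univ) ∧ (C₁.SE ∪ L.SE ∪ C₂.SE = Set.univ) ∧
  ∀ D : Sub G, Set.range g ⊆ D.SV →
    (C₁.SV ∪ L.SV ∪ D.SV = Set.univ) → (C₁.SE ∪ L.SE ∪ D.SE = Set.univ) →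
    C₂.le D

end LHypergraph

/-! Only minimality is needed: the inputs together with the hyperedges outside `L` that reach `L`
(and their endpoints) already form a candidate for `C₁`, and all nodes with the hyperedges outside
`C₁ ∪ L` form a candidate for `C₂`. -/

namespace LHypergraph

variable {G : LHypergraph}

def Sub.span (S : Set G.V) (F : Set G.E) : Sub G where
  SV := S ∪ {v | ∃ e ∈ F, v ∈ G.src e ∨ v ∈ G.tgt e}
  SE := F
  closed_src e he _ hv := Or.inr ⟨e, he, Or.inl hv⟩
  closed_tgt e he _ hv := Or.inr ⟨e, he, Or.inr hv⟩

def Sub.ofEdges (F : Set G.E) : Sub G where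
  SV := Set.univ
  SE := F
  closed_src _ _ _ _ := trivial
  closed_tgt _ _ _ _ := trivial

theorem IsC₁.edges_subset {m : ℕ} {f : Fin m → G.V} {L C₁ : Sub G} (hC₁ : IsC₁ G f L C₁) :
    C₁.SE ⊆ {e | e ∉ L.SE ∧ EdgeToSub G L e} :=
  (hC₁.2.2 (Sub.span (Set.range f) _) Set.subset_union_left subset_rfl).2

theorem IsC₁.disjoint_edges {m : ℕ} {f : Fin m → G.V} {L C₁ : Sub G} (hC₁ : IsC₁ G f L C₁) :
    Disjoint C₁.SE L.SE :=
  Set.disjoint_left.2 fun _ he => (hC₁.edges_subset he).1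

theorem IsC₂.edges_subset_compl {n : ℕ} {g : Fin n → G.V} {L C₁ C₂ : Sub G}
    (hC₂ : IsC₂ G g L C₁ C₂) : C₂.SE ⊆ (C₁.SE ∪ L.SE)ᶜ :=
  (hC₂.2.2.2 (Sub.ofEdges _) (Set.subset_univ _) (Set.union_univ _) (Set.union_compl_self _)).2

theorem IsC₂.disjoint_edges {n : ℕ} {g : Fin n → G.V} {L C₁ C₂ : Sub G}
    (hC₂ : IsC₂ G g L C₁ C₂) : Disjoint (C₁.SE ∪ L.SE) C₂.SE :=
  Set.subset_compl_iff_disjoint_left.1 hC₂.edges_subset_compl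

end LHypergraph

open LHypergraph in
theorem c1_c2_share_no_hyperedges_general {m n : ℕ} (G : LHypergraph)
    (f : Fin m → G.V) (g : Fin n → G.V)
    (L : Sub G)
    (C₁ : Sub G) (hC₁ : IsC₁ G f L C₁)
    (C₂ : Sub G) (hC₂ : IsC₂ G g L C₁ C₂) :
    C₁.SE ∩ C₂.SE = ∅ ∧ C₁.SE ∩ L.SE = ∅ ∧ L.SE ∩ C₂.SE = ∅ := by
  obtain ⟨hC₁C₂, hLC₂⟩ := Set.disjoint_union_left.1 hC₂.disjoint_edges
  exact ⟨Set.disjoint_iff_inter_eq_empty.1 hC₁C₂,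
    Set.disjoint_iff_inter_eq_empty.1 hC₁.disjoint_edges,
    Set.disjoint_iff_inter_eq_empty.1 hLC₂⟩

open LHypergraph in
theorem c1_c2_share_no_hyperedges {m n : ℕ} (G : LHypergraph)
    (f : Fin m → G.V) (g : Fin n → G.V)
    (hacyclic : G.Acyclic)
    (hgmono : Function.Injective g)
    (hgterm : Set.range g = {v : G.V | G.Terminal v})
    (L : Sub G) (hL : L.Convex)
    (C₁ : Sub G) (hC₁ : IsC₁ G f L C₁)
    (C₂ : Sub G) (hC₂ : IsC₂ G g L C₁ C₂) :
    C₁.SE ∩ C₂.SE = ∅ ∧ C₁.SE ∩ L.SE = ∅ ∧ L.SE ∩ C₂.SE = ∅ :=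
  c1_c2_share_no_hyperedges_general G f g L C₁ hC₁ C₂ hC₂
end

section
/- If L is a convex sub-hypergraph of an acyclic hypergraph G and C₂ is the smallest sub-hypergraph containing the outputs of G such that G is covered by C₁, L, and C₂ (with C₁ the predecessor-closure of L minus L), then every terminal node v of L either is terminal in G, or every hyperedge of G having v as a source lies in C₂ (not in C₁). -/
structure DirHypergraph where
  V : Type
  E : Type
  src : E → List V
  tgt : E → List V

namespace DirHypergraph

inductive Walk (G : DirHypergraph) : G.V → G.V → Type where
  | nil (v : G.V) : Walk G v v
  | cons {u v w : G.V} (e : G.E) (hu : u ∈ G.src e) (hv : v ∈ G.tgt e)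
      (p : Walk G v w) : Walk G u w

def Walk.verts {G : DirHypergraph} : {u v : G.V} → Walk G u v → List G.V
  | _, _, .nil v => [v]
  | u, _, .cons _ _ _ p => u :: p.verts

def Walk.edges {G : DirHypergraph} : {u v : G.V} → Walk G u v → List G.E
  | _, _, .nil _ => []
  | _, _, .cons e _ _ p => e :: p.edges

/-- A hypergraph is acyclic if no path contains the same node twice. -/
def Acyclic (G : DirHypergraph) : Prop :=
  ∀ {u v : G.V} (p : Walk G u v), p.verts.Nodup

/-- There exists a nonempty path from u to v. -/
def Reaches (G : DirHypergraph) (u v : G.V) : Prop :=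
  ∃ p : Walk G u v, p.edges ≠ []

/-- A node is terminal if it is the source of no hyperedge. -/
def Terminal (G : DirHypergraph) (v : G.V) : Prop := ∀ e : G.E, v ∉ G.src e

/-- A sub-hypergraph: sets of nodes and hyperedges closed under the
source and target maps. -/
structure Sub (G : DirHypergraph) where
  SV : Set G.V
  SE : Set G.E
  closed_src : ∀ e ∈ SE, ∀ v ∈ G.src e, v ∈ SV
  closed_tgt : ∀ e ∈ SE, ∀ v ∈ G.tgt e, v ∈ SV

/-- Inclusion of sub-hypergraphs. -/
def Sub.le {G : DirHypergraph} (A B : Sub G) : Prop := A.SV ⊆ B.SV ∧ A.SE ⊆ B.SE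

/-- A sub-hypergraph L is convex if every hyperedge on any path of G between
two nodes of L is in L. -/
def Sub.Convex {G : DirHypergraph} (L : Sub G) : Prop :=
  ∀ (u v : G.V) (p : Walk G u v), u ∈ L.SV → v ∈ L.SV → ∀ e ∈ p.edges, e ∈ L.SE

/-- A hyperedge has a path to L: one of its targets is in L or reaches a node
of L. -/
def EdgeToSub (G : DirHypergraph) (L : Sub G) (e : G.E) : Prop :=
  ∃ v ∈ G.tgt e, ∃ w ∈ L.SV, v = w ∨ G.Reaches v w

/-- `IsC₁ G f L C₁` : C₁ is the smallest sub-hypergraph of G containing the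
inputs of G and every hyperedge of G not in L that has a path to L. -/
def IsC₁ {m : ℕ} (G : DirHypergraph) (f : Fin m → G.V) (L C₁ : Sub G) : Prop :=
  Set.range f ⊆ C₁.SV ∧
  {e : G.E | e ∉ L.SE ∧ EdgeToSub G L e} ⊆ C₁.SE ∧
  ∀ D : Sub G, Set.range f ⊆ D.SV → {e : G.E | e ∉ L.SE ∧ EdgeToSub G L e} ⊆ D.SE →
    C₁.le D

/-- `IsC₂ G g L C₁ C₂` : C₂ is the smallest sub-hypergraph of G containing the
outputs of G such that C₁ ∪ L ∪ C₂ = G. -/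
def IsC₂ {n : ℕ} (G : DirHypergraph) (g : Fin n → G.V) (L C₁ C₂ : Sub G) : Prop :=
  Set.range g ⊆ C₂.SV ∧
  (C₁.SV ∪ L.SV ∪ C₂.SV = Set.univ) ∧ (C₁.SE ∪ L.SE ∪ C₂.SE = Set.univ) ∧
  ∀ D : Sub G, Set.range g ⊆ D.SV →
    (C₁.SV ∪ L.SV ∪ D.SV = Set.univ) → (C₁.SE ∪ L.SE ∪ D.SE = Set.univ) →
    C₂.le D

end DirHypergraph

/-! A hyperedge leaving a node of the convex sub-hypergraph `L` that had a path back to `L` would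
lie on a path between two nodes of `L`, hence belong to `L`. So an edge leaving a terminal node of
`L` is neither in `L` nor, by minimality of `C₁`, in `C₁`; since `C₁`, `L` and `C₂` cover `G`, it
lies in `C₂`. -/

namespace DirHypergraph

variable {G : DirHypergraph}

def Sub.ofEdges (S : Set G.V) (F : Set G.E) : Sub G where
  SV := S ∪ {w | ∃ e ∈ F, w ∈ G.src e ∨ w ∈ G.tgt e}
  SE := F
  closed_src e he _ hw := Or.inr ⟨e, he, Or.inl hw⟩
  closed_tgt e he _ hw := Or.inr ⟨e, he, Or.inr hw⟩

theorem IsC₁.edges_subset {m : ℕ} {f : Fin m → G.V} {L C₁ : Sub G} (hC₁ : IsC₁ G f L C₁) :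
    C₁.SE ⊆ {e : G.E | e ∉ L.SE ∧ EdgeToSub G L e} :=
  (hC₁.2.2 (Sub.ofEdges _ _) Set.subset_union_left subset_rfl).2

theorem IsC₂.mem_edges {n : ℕ} {g : Fin n → G.V} {L C₁ C₂ : Sub G} (hC₂ : IsC₂ G g L C₁ C₂)
    {e : G.E} (he₁ : e ∉ C₁.SE) (heL : e ∉ L.SE) : e ∈ C₂.SE := by
  have he : e ∈ C₁.SE ∪ L.SE ∪ C₂.SE := hC₂.2.2.1 ▸ Set.mem_univ e
  rcases he with (he | he) | he
  exacts [absurd he he₁, absurd he heL, he]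

theorem EdgeToSub.exists_walk {L : Sub G} {e : G.E} (he : EdgeToSub G L e) :
    ∃ t ∈ G.tgt e, ∃ w ∈ L.SV, Nonempty (Walk G t w) := by
  obtain ⟨t, ht, w, hw, rfl | ⟨p, -⟩⟩ := he
  exacts [⟨t, ht, t, hw, ⟨.nil t⟩⟩, ⟨t, ht, w, hw, ⟨p⟩⟩]

theorem Sub.Convex.not_edgeToSub {L : Sub G} (hL : L.Convex) {v : G.V} (hv : v ∈ L.SV)
    {e : G.E} (hve : v ∈ G.src e) (heL : e ∉ L.SE) : ¬ EdgeToSub G L e := by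
  intro he
  obtain ⟨t, ht, w, hw, ⟨p⟩⟩ := he.exists_walk
  exact heL (hL v w (.cons e hve ht p) hv hw e List.mem_cons_self)

end DirHypergraph

open DirHypergraph in
theorem terminal_node_of_L_general {m n : ℕ} (G : DirHypergraph)
    (f : Fin m → G.V) (g : Fin n → G.V)
    (L : Sub G) (hL : L.Convex)
    (C₁ : Sub G) (hC₁ : IsC₁ G f L C₁)
    (C₂ : Sub G) (hC₂ : IsC₂ G g L C₁ C₂)
    (v : G.V) (hvL : v ∈ L.SV) (hvterm : ∀ e ∈ L.SE, v ∉ G.src e) :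
    (∀ e : G.E, v ∉ G.src e) ∨
    (∀ e : G.E, v ∈ G.src e → e ∈ C₂.SE ∧ e ∉ C₁.SE) := by
  refine .inr fun e hve => ?_
  have heL : e ∉ L.SE := fun he => hvterm e he hve
  have heC₁ : e ∉ C₁.SE := fun he => hL.not_edgeToSub hvL hve heL (hC₁.edges_subset he).2
  exact ⟨hC₂.mem_edges heC₁ heL, heC₁⟩

open DirHypergraph in
theorem terminal_node_of_L {m n : ℕ} (G : DirHypergraph)
    (f : Fin m → G.V) (g : Fin n → G.V)
    (hacyclic : G.Acyclic)
    (hgmono : Function.Injective g)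
    (hgterm : Set.range g = {v : G.V | G.Terminal v})
    (L : Sub G) (hL : L.Convex)
    (C₁ : Sub G) (hC₁ : IsC₁ G f L C₁)
    (C₂ : Sub G) (hC₂ : IsC₂ G g L C₁ C₂)
    (v : G.V) (hvL : v ∈ L.SV) (hvterm : ∀ e ∈ L.SE, v ∉ G.src e) :
    (∀ e : G.E, v ∉ G.src e) ∨
    (∀ e : G.E, v ∈ G.src e → e ∈ C₂.SE ∧ e ∉ C₁.SE) :=
  terminal_node_of_L_general G f g L hL C₁ hC₁ C₂ hC₂ v hvL hvterm
end
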